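/- arXiv:2211.04200 — 2 statements merged into one kernel-verified Lean document; each statement's English description precedes it below -/
import Mathlib

section
/- Let g(β) = log₂(1 + C(1−β)) − log₂(1 + D₁√(D₂D₃)) + D₁(D₂+D₃)β / (2√(D₂D₃)(1 + D₁√(D₂D₃)) ln 2) for β ∈ [0,1], where C, D₁, D₂, D₃ > 0 and D₁√(D₂D₃) = C (i.e., D₁ = C/√(D₂D₃)). Then g is concave in β, g(0) = 0, and g'(0) ≤ 0 if and only if 1/D₂ + 1/D₃ ≤ 2; consequently g(β) ≤ 0 for all β ∈ [0,1] if and only if 1/D₂ + 1/D₃ ≤ 2. -/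
/-!
Substituting `D₁ = C / √(D₂D₃)` turns `g` into
`(log (1 + C(1 - β)) - log (1 + C) + m β) / log 2` with `m = C (1/D₂ + 1/D₃) / (2 (1 + C))`:
the logarithm of an affine function plus a linear term, hence concave, vanishing at `0`,
with `g'(0) = C (1/D₂ + 1/D₃ - 2) / (2 (1 + C) log 2)`. A concave function on `[0, 1]` is
maximal at `0` exactly when its derivative there is nonpositive: one direction is Fermat's
rule at an endpoint, the other says that chords from `0` have slope at most `g'(0)`.
-/

/-- The function `g(β) = ∂R̂/∂η |_{η=0}` from Proposition 3. -/
noncomputable def gfun (C D1 D2 D3 β : ℝ) : ℝ :=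
  Real.logb 2 (1 + C * (1 - β)) - Real.logb 2 (1 + D1 * Real.sqrt (D2 * D3)) +
    D1 * (D2 + D3) * β /
      (2 * Real.sqrt (D2 * D3) * (1 + D1 * Real.sqrt (D2 * D3)) * Real.log 2)

open Real Set

theorem ConcaveOn.isMaxOn_Icc_left_iff {f : ℝ → ℝ} {f' a b : ℝ} (hf : ConcaveOn ℝ (Icc a b) f)
    (hab : a < b) (hd : HasDerivAt f f' a) : IsMaxOn f (Icc a b) a ↔ f' ≤ 0 := by
  constructor
  · intro hmax
    have hcone : b - a ∈ posTangentConeAt (Icc a b) a :=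
      sub_mem_posTangentConeAt_of_segment_subset (segment_eq_Icc hab.le).subset
    have := hmax.localize.hasFDerivWithinAt_nonpos hd.hasDerivWithinAt.hasFDerivWithinAt hcone
    rw [ContinuousLinearMap.toSpanSingleton_apply, smul_eq_mul] at this
    exact nonpos_of_mul_nonpos_right this (sub_pos.2 hab)
  · intro hf'
    rw [isMaxOn_iff]
    intro x hx
    rcases hx.1.eq_or_lt with rfl | hax
    · exact le_rfl
    have := (hf.slope_le_of_hasDerivAt (left_mem_Icc.2 hab.le) hx hax hd).trans hf'
    rw [slope_def_field, div_nonpos_iff] at this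
    rcases this with ⟨-, h⟩ | ⟨h, -⟩ <;> linarith

section

variable {C D1 D2 D3 : ℝ}

theorem gfun_zero (hrel : D1 * √(D2 * D3) = C) : gfun C D1 D2 D3 0 = 0 := by
  simp [gfun, hrel]

theorem gfun_eq (hD2 : 0 < D2) (hD3 : 0 < D3) (hrel : D1 * √(D2 * D3) = C) :
    gfun C D1 D2 D3 = fun β =>
      (log (1 + C * (1 - β)) - log (1 + C) + C * (1 / D2 + 1 / D3) / (2 * (1 + C)) * β) / log 2 := by
  have hs : 0 < √(D2 * D3) := sqrt_pos.2 (mul_pos hD2 hD3)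
  have hs2 : √(D2 * D3) ^ 2 = D2 * D3 := sq_sqrt (mul_pos hD2 hD3).le
  have hD1 : D1 = C / √(D2 * D3) := by rw [← hrel, mul_div_cancel_right₀ _ hs.ne']
  funext β
  simp only [gfun, logb, hrel]
  subst hD1
  field_simp
  rw [hs2]
  ring

theorem concaveOn_gfun (hC : 0 ≤ C) (hD2 : 0 < D2) (hD3 : 0 < D3)
    (hrel : D1 * √(D2 * D3) = C) : ConcaveOn ℝ (Icc 0 1) (gfun C D1 D2 D3) := by
  have hlog : ConcaveOn ℝ (Icc 0 1) fun β => log (1 + C * (1 - β)) := by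
    have hmaps : Icc (0 : ℝ) 1 ⊆ AffineMap.lineMap (1 + C) 1 ⁻¹' Ioi 0 := by
      intro β hβ
      simp only [mem_preimage, AffineMap.lineMap_apply_ring, mem_Ioi]
      nlinarith [hβ.1, hβ.2]
    refine ((strictConcaveOn_log_Ioi.concaveOn.comp_affineMap _).subset hmaps
      (convex_Icc 0 1)).congr fun β _ => ?_
    simp only [Function.comp_apply, AffineMap.lineMap_apply_ring]
    ring_nf
  rw [gfun_eq hD2 hD3 hrel]
  refine (((hlog.sub (convexOn_const (log (1 + C)) (convex_Icc 0 1))).add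
    ((LinearMap.mul ℝ ℝ (C * (1 / D2 + 1 / D3) / (2 * (1 + C)))).concaveOn
      (convex_Icc 0 1))).smul (inv_nonneg.2 (log_nonneg one_le_two))).congr fun β _ => ?_
  simp [div_eq_inv_mul]

theorem hasDerivAt_gfun_zero (hC : 0 ≤ C) (hD2 : 0 < D2) (hD3 : 0 < D3)
    (hrel : D1 * √(D2 * D3) = C) :
    HasDerivAt (gfun C D1 D2 D3) (C / (2 * (1 + C) * log 2) * (1 / D2 + 1 / D3 - 2)) 0 := by
  rw [gfun_eq hD2 hD3 hrel]
  have hinner : HasDerivAt (fun β : ℝ => 1 + C * (1 - β)) (-C) 0 := by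
    simpa using (((hasDerivAt_id (0 : ℝ)).const_sub 1).const_mul C).const_add 1
  have := (((hinner.log (by positivity)).sub_const (log (1 + C))).add
    ((hasDerivAt_id (0 : ℝ)).const_mul (C * (1 / D2 + 1 / D3) / (2 * (1 + C))))).div_const (log 2)
  refine this.congr_deriv ?_
  field_simp
  ring

end

theorem stmt_11_general (C D1 D2 D3 : ℝ) (hC : 0 < C) (h2 : 0 < D2)
    (h3 : 0 < D3) (hrel : D1 * Real.sqrt (D2 * D3) = C) :
    ConcaveOn ℝ (Set.Icc 0 1) (gfun C D1 D2 D3) ∧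
    gfun C D1 D2 D3 0 = 0 ∧
    (deriv (gfun C D1 D2 D3) 0 ≤ 0 ↔ 1 / D2 + 1 / D3 ≤ 2) ∧
    ((∀ β ∈ Set.Icc (0 : ℝ) 1, gfun C D1 D2 D3 β ≤ 0) ↔ 1 / D2 + 1 / D3 ≤ 2) := by
  have hconc := concaveOn_gfun hC.le h2 h3 hrel
  have hzero := gfun_zero hrel
  have hderiv := hasDerivAt_gfun_zero hC.le h2 h3 hrel
  have hsign : C / (2 * (1 + C) * log 2) * (1 / D2 + 1 / D3 - 2) ≤ 0 ↔ 1 / D2 + 1 / D3 ≤ 2 := by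
    have hfactor : 0 < C / (2 * (1 + C) * log 2) := by positivity
    simpa [sub_nonpos] using mul_le_mul_iff_right₀ (b := 1 / D2 + 1 / D3 - 2) (c := 0) hfactor
  refine ⟨hconc, hzero, hderiv.deriv ▸ hsign, ?_⟩
  rw [← hsign, ← hconc.isMaxOn_Icc_left_iff zero_lt_one hderiv, isMaxOn_iff, hzero]

theorem stmt_11 (C D1 D2 D3 : ℝ) (hC : 0 < C) (h1 : 0 < D1) (h2 : 0 < D2)
    (h3 : 0 < D3) (hrel : D1 * Real.sqrt (D2 * D3) = C) :
    ConcaveOn ℝ (Set.Icc 0 1) (gfun C D1 D2 D3) ∧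
    gfun C D1 D2 D3 0 = 0 ∧
    (deriv (gfun C D1 D2 D3) 0 ≤ 0 ↔ 1 / D2 + 1 / D3 ≤ 2) ∧
    ((∀ β ∈ Set.Icc (0 : ℝ) 1, gfun C D1 D2 D3 β ≤ 0) ↔ 1 / D2 + 1 / D3 ≤ 2) :=
  stmt_11_general C D1 D2 D3 hC h2 h3 hrel
end

section
/- For fixed β ∈ [0,1], the function η ↦ (1−η)·log₂(1 + D₁√((ηβ+D₂)(ηβ+D₃))) with D₁, D₂, D₃ > 0 is concave on [0,1]. -/
/-! The rate is `(1 - η) * logb 2 (r η)` with `r η = 1 + D1 * √(A η * B η)` for the affine,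
nonnegative, nondecreasing `A η = η * β + D2` and `B η = η * β + D3`. By Cauchy–Schwarz the geometric
mean of two nonnegative concave functions is concave, so `r` is concave; `logb 2` is concave and
increasing, so `logb 2 ∘ r` is concave, nondecreasing and nonnegative (`r ≥ 1`). Its product with
the nonnegative, decreasing, affine `1 - η` is concave because the two factors vary oppositely. -/

open Real Set

theorem Real.sqrt_mul_sqrt_add_sqrt_mul_sqrt_le {p q r t : ℝ} (hp : 0 ≤ p) (hq : 0 ≤ q)
    (hr : 0 ≤ r) (ht : 0 ≤ t) : √p * √q + √r * √t ≤ √(p + r) * √(q + t) := by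
  simpa [Fin.sum_univ_two] using Real.sum_sqrt_mul_sqrt_le Finset.univ (f := ![p, r])
    (g := ![q, t]) (by simp [Fin.forall_fin_two, hp, hr]) (by simp [Fin.forall_fin_two, hq, ht])

theorem ConcaveOn.sqrt_mul {E : Type*} [AddCommMonoid E] [Module ℝ E] {s : Set E}
    {f g : E → ℝ} (hf : ConcaveOn ℝ s f) (hg : ConcaveOn ℝ s g)
    (hf₀ : ∀ x ∈ s, 0 ≤ f x) (hg₀ : ∀ x ∈ s, 0 ≤ g x) :
    ConcaveOn ℝ s (fun x => √(f x * g x)) := by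
  refine ⟨hf.1, fun x hx y hy a b ha hb hab => ?_⟩
  have scale : ∀ {c u : ℝ} (v : ℝ), 0 ≤ c → 0 ≤ u → c * √(u * v) = √(c * u) * √(c * v) :=
    fun {c u} v hc hu => by
      rw [← Real.sqrt_mul (mul_nonneg hc hu), mul_mul_mul_comm,
        Real.sqrt_mul (mul_self_nonneg c), Real.sqrt_mul_self hc]
  have hfx := hf₀ x hx
  have hgx := hg₀ x hx
  have hfy := hf₀ y hy
  have hgy := hg₀ y hy
  calc a • √(f x * g x) + b • √(f y * g y)
      = √(a * f x) * √(a * g x) + √(b * f y) * √(b * g y) := by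
        rw [smul_eq_mul, smul_eq_mul, scale _ ha hfx, scale _ hb hfy]
    _ ≤ √(a * f x + b * f y) * √(a * g x + b * g y) :=
        Real.sqrt_mul_sqrt_add_sqrt_mul_sqrt_le (by positivity) (by positivity)
          (by positivity) (by positivity)
    _ ≤ √(f (a • x + b • y)) * √(g (a • x + b • y)) := by
        gcongr
        · exact hf.2 hx hy ha hb hab
        · exact hg.2 hx hy ha hb hab
    _ = √(f (a • x + b • y) * g (a • x + b • y)) :=
        (Real.sqrt_mul (hf₀ _ (hf.1 hx hy ha hb hab)) _).symm

theorem ConcaveOn.comp_of_mapsTo {E : Type*} [AddCommMonoid E] [Module ℝ E] {s : Set E}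
    {t : Set ℝ} {f : E → ℝ} {g : ℝ → ℝ} (hg : ConcaveOn ℝ t g) (hf : ConcaveOn ℝ s f)
    (hfst : MapsTo f s t) (hg_mono : MonotoneOn g t) : ConcaveOn ℝ s (g ∘ f) :=
  ⟨hf.1, fun _ hx _ hy _ _ ha hb hab =>
    (hg.2 (hfst hx) (hfst hy) ha hb hab).trans <|
      hg_mono (hg.1 (hfst hx) (hfst hy) ha hb hab) (hfst (hf.1 hx hy ha hb hab))
        (hf.2 hx hy ha hb hab)⟩

theorem Real.concaveOn_logb_Ioi {b : ℝ} (hb : 1 ≤ b) : ConcaveOn ℝ (Ioi 0) (logb b) := by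
  have hlogb : logb b = fun x => (log b)⁻¹ • log x := funext fun x => by
    rw [logb, smul_eq_mul, div_eq_inv_mul]
  exact hlogb ▸ strictConcaveOn_log_Ioi.concaveOn.smul (inv_nonneg.2 (log_nonneg hb))

theorem ConcaveOn.one_sub_mul {s : Set ℝ} {g : ℝ → ℝ} (hs : s ⊆ Iic 1) (hg : ConcaveOn ℝ s g)
    (hg_mono : MonotoneOn g s) (hg₀ : ∀ x ∈ s, 0 ≤ g x) :
    ConcaveOn ℝ s (fun x => (1 - x) * g x) :=
  ((concaveOn_const 1 hg.1).sub (convexOn_id hg.1)).mul hg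
    (fun _ hx => sub_nonneg.2 (hs hx)) hg₀
    (AntitoneOn.antivaryOn (fun _ _ _ _ hxy => sub_le_sub_left hxy 1) hg_mono)

theorem stmt_12 (β D1 D2 D3 : ℝ) (hβ : β ∈ Set.Icc (0 : ℝ) 1)
    (h1 : 0 < D1) (h2 : 0 < D2) (h3 : 0 < D3) :
    ConcaveOn ℝ (Set.Icc 0 1)
      (fun η : ℝ => (1 - η) * Real.logb 2 (1 + D1 * Real.sqrt ((η * β + D2) * (η * β + D3)))) := by
  obtain ⟨hβ₀, -⟩ := hβ
  have hs : Convex ℝ (Icc (0 : ℝ) 1) := convex_Icc 0 1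
  have hA (D : ℝ) : ConcaveOn ℝ (Icc 0 1) (fun η : ℝ => η * β + D) :=
    ⟨hs, fun _ _ _ _ _ _ _ _ hab => le_of_eq (by
      simp only [smul_eq_mul]
      linear_combination D * hab)⟩
  have hA_mono (D : ℝ) : MonotoneOn (fun η : ℝ => η * β + D) (Icc 0 1) :=
    fun _ _ _ _ hxy => by dsimp only; gcongr
  have hA₀ {D : ℝ} (hD : 0 ≤ D) : ∀ η ∈ Icc (0 : ℝ) 1, 0 ≤ η * β + D :=
    fun η hη => by have := hη.1; positivity
  set r := fun η : ℝ => 1 + D1 * √((η * β + D2) * (η * β + D3))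
  have hr : ConcaveOn ℝ (Icc 0 1) r :=
    (concaveOn_const 1 hs).add
      (((hA D2).sqrt_mul (hA D3) (hA₀ h2.le) (hA₀ h3.le)).smul h1.le)
  have hr_mono : MonotoneOn r (Icc 0 1) := fun x hx y hy hxy => by
    have := (hA_mono D2).mul (hA_mono D3) (hA₀ h2.le) (hA₀ h3.le) hx hy hxy
    simp only [r, Pi.mul_apply] at this ⊢
    gcongr
  have hr_one (η : ℝ) : 1 ≤ r η := le_add_of_nonneg_right (mul_nonneg h1.le (sqrt_nonneg _))
  have hr_pos : MapsTo r (Icc 0 1) (Ioi 0) := fun η _ => one_pos.trans_le (hr_one η)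
  have hlogb_mono := (strictMonoOn_logb one_lt_two).monotoneOn
  exact ConcaveOn.one_sub_mul (fun _ hη => hη.2)
    ((concaveOn_logb_Ioi one_le_two).comp_of_mapsTo hr hr_pos hlogb_mono)
    (hlogb_mono.comp hr_mono hr_pos) (fun η _ => logb_nonneg one_lt_two (hr_one η))
end
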